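/- If A = I + K where K is a compact operator on a Hilbert space and I + K is invertible, then GMRES applied to A x = b converges superlinearly; in particular, for every ε > 0 there exists N such that the residual after n ≥ N iterations satisfies ‖r_n‖ ≤ ε^n ‖r_0‖. -/

import Mathlib

/-!
Eigenvectors of infinitely many eigenvalues `|λₙ| ≥ r` of a compact operator span a strictly
increasing chain of subspaces; a Riesz-lemma sequence along that chain is bounded but its image
is `r`-separated, which compactness forbids. With the Fredholm alternative, only finitely many
points of `σ(1 + K)` lie outside any disc around `1`. For `ε > 0` let `q` vanish at those outside
the disc of radius `ε / 2` with `q 0 = 1`; then `p = q * (1 - X) ^ k` satisfies `|p| < ε ^ deg p`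
on `σ(1 + K)` once `k` is large. By spectral mapping and Gelfand's formula
`‖p(1 + K) ^ N‖ ≤ ε ^ ((N + 1) deg p)` for large `N`, and `p ^ ⌊n / deg p⌋` is a GMRES polynomial
of degree at most `n`.
-/

open Polynomial Filter Module End

section IncreasingChain

variable {𝕜 X : Type*} [NontriviallyNormedField 𝕜] [NormedAddCommGroup X] [NormedSpace 𝕜 X]

theorem exists_bounded_seq_one_le_norm_sub_of_strictMono {V : ℕ → Submodule 𝕜 X}
    (hV : StrictMono V) (hVc : ∀ n, IsClosed (V n : Set X)) :
    ∃ R : ℝ, ∃ f : ℕ → X, ∀ n, f n ∈ V (n + 1) ∧ ‖f n‖ ≤ R ∧ ∀ y ∈ V n, 1 ≤ ‖f n - y‖ := by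
  obtain ⟨c, hc⟩ := NormedField.exists_one_lt_norm 𝕜
  refine ⟨‖c‖ + 1, ?_⟩
  have (n : ℕ) : ∃ x ∈ V (n + 1), ‖x‖ ≤ ‖c‖ + 1 ∧ ∀ y ∈ V n, 1 ≤ ‖x - y‖ := by
    have hclosed : IsClosed ((V n).comap (V (n + 1)).subtype : Set (V (n + 1))) :=
      (hVc n).preimage_val
    obtain ⟨x, hxV, hxn⟩ := SetLike.exists_of_lt (hV (Nat.lt_succ_self n))
    obtain ⟨⟨x₀, hx₀⟩, hx₀n, hx₀y⟩ := riesz_lemma_of_norm_lt hc (lt_add_one _) hclosed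
      ⟨⟨x, hxV⟩, hxn⟩
    exact ⟨x₀, hx₀, hx₀n, fun y hy ↦ hx₀y ⟨y, hV.monotone n.le_succ hy⟩ hy⟩
  choose f hfV hfn hfy using this
  exact ⟨f, fun n ↦ ⟨hfV n, hfn n, hfy n⟩⟩

variable [CompleteSpace 𝕜]

theorem Module.End.exists_strictMono_of_injective_hasEigenvalue {f : End 𝕜 X} {μ : ℕ → 𝕜}
    (hμ : Function.Injective μ) (hf : ∀ n, f.HasEigenvalue (μ n)) :
    ∃ V : ℕ → Submodule 𝕜 X, StrictMono V ∧ (∀ n, IsClosed (V n : Set X)) ∧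
      ∀ n, ∀ v ∈ V (n + 1), f v - μ n • v ∈ V n := by
  choose e he using fun n ↦ (hf n).exists_hasEigenvector
  have hli := eigenvectors_linearIndependent' f μ hμ e he
  refine ⟨fun n ↦ Submodule.span 𝕜 (e '' Set.Iio n), strictMono_nat_of_lt_succ fun n ↦ ?_,
    fun n ↦ ?_, fun n v hv ↦ ?_⟩
  · refine (Submodule.span_mono (Set.image_mono fun i hi ↦ ?_)).lt_of_not_ge fun hle ↦ ?_
    · exact lt_trans hi n.lt_succ_self
    · exact hli.notMem_span_image (show n ∉ Set.Iio n from lt_irrefl n)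
        (hle (Submodule.subset_span ⟨n, n.lt_succ_self, rfl⟩))
  · have := FiniteDimensional.span_of_finite 𝕜 ((Set.finite_Iio n).image e)
    exact Submodule.closed_of_finiteDimensional _
  · have hspan : Submodule.span 𝕜 (e '' Set.Iio (n + 1)) ≤
        (Submodule.span 𝕜 (e '' Set.Iio n)).comap (f - μ n • 1) := by
      rw [Submodule.span_le]
      rintro _ ⟨i, hi, rfl⟩
      have hfe : f (e i) - μ n • e i = (μ i - μ n) • e i := by
        rw [sub_smul, ← (he i).apply_eq_smul]
      rcases Nat.lt_succ_iff_lt_or_eq.1 hi with hi | rfl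
      · simpa [hfe] using Submodule.smul_mem _ (μ i - μ n)
          (Submodule.subset_span (R := 𝕜) (Set.mem_image_of_mem e (Set.mem_Iio.2 hi)))
      · simp [hfe]
    simpa using hspan hv

end IncreasingChain

namespace IsCompactOperator

variable {𝕜 X : Type*} [NontriviallyNormedField 𝕜] [NormedAddCommGroup X] [NormedSpace 𝕜 X]
  {T : X →L[𝕜] X}

theorem not_pairwise_le_norm_sub (hT : IsCompactOperator T) {f : ℕ → X} {R : ℝ}
    (hf : ∀ n, ‖f n‖ ≤ R) {r : ℝ} (hr : 0 < r) :
    ¬ Pairwise fun m n ↦ r ≤ ‖T (f m) - T (f n)‖ := by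
  intro hsep
  obtain ⟨C, hC, hTC⟩ := hT.image_closedBall_subset_compact R
  obtain ⟨y, -, ψ, hψ, hψy⟩ := hC.tendsto_subseq (fun n ↦ hTC ⟨f n, by simpa using hf n, rfl⟩)
  obtain ⟨N, hN⟩ := Metric.cauchySeq_iff'.1 hψy.cauchySeq r hr
  have hlt : ‖T (f (ψ (N + 1))) - T (f (ψ N))‖ < r := by
    simpa [dist_eq_norm_sub] using hN (N + 1) N.le_succ
  exact hlt.not_ge (hsep (hψ.injective.ne N.succ_ne_self))

variable [CompleteSpace 𝕜]

theorem finite_setOf_le_norm_hasEigenvalue (hT : IsCompactOperator T) {r : ℝ} (hr : 0 < r) :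
    {μ : 𝕜 | r ≤ ‖μ‖ ∧ HasEigenvalue (T : End 𝕜 X) μ}.Finite := by
  by_contra hinf
  set g := Set.Infinite.natEmbedding _ hinf
  set μ : ℕ → 𝕜 := fun n ↦ g n
  have hμ (n : ℕ) : r ≤ ‖μ n‖ ∧ HasEigenvalue (T : End 𝕜 X) (μ n) := (g n).2
  obtain ⟨V, hVmono, hVc, hVμ⟩ := Module.End.exists_strictMono_of_injective_hasEigenvalue
    (Subtype.val_injective.comp g.injective) fun n ↦ (hμ n).2
  obtain ⟨R, f, hf⟩ := exists_bounded_seq_one_le_norm_sub_of_strictMono hVmono hVc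
  choose hfV hfR hfy using hf
  have : Std.Symm fun m n ↦ r ≤ ‖T (f m) - T (f n)‖ := ⟨fun m n h ↦ by rwa [norm_sub_rev]⟩
  refine hT.not_pairwise_le_norm_sub hfR hr (Pairwise.of_gt fun n m hmn ↦ ?_)
  have hTfm : T (f m) ∈ V n := by
    rw [← sub_add_cancel (T (f m)) (μ m • f m)]
    exact add_mem (hVmono.monotone hmn.le (hVμ m _ (hfV m)))
      (hVmono.monotone hmn (Submodule.smul_mem _ _ (hfV m)))
  set u := (μ n)⁻¹ • (T (f m) - (T (f n) - μ n • f n))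
  have hu : u ∈ V n := Submodule.smul_mem _ _ (sub_mem hTfm (hVμ n _ (hfV n)))
  have hμn : μ n ≠ 0 := norm_pos_iff.1 (hr.trans_le (hμ n).1)
  have hdiff : T (f n) - T (f m) = μ n • (f n - u) := by
    rw [smul_sub, smul_inv_smul₀ hμn]
    abel
  calc r = r * 1 := (mul_one r).symm
    _ ≤ ‖μ n‖ * ‖f n - u‖ := mul_le_mul (hμ n).1 (hfy n u hu) zero_le_one (norm_nonneg _)
    _ = ‖T (f n) - T (f m)‖ := by rw [hdiff, norm_smul]

variable [CompleteSpace X]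

theorem finite_spectrum_le_norm (hT : IsCompactOperator T) {r : ℝ} (hr : 0 < r) :
    {μ ∈ spectrum 𝕜 T | r ≤ ‖μ‖}.Finite :=
  (hT.finite_setOf_le_norm_hasEigenvalue hr).subset fun _ ⟨hμ, hrμ⟩ ↦
    ⟨hrμ, (hT.hasEigenvalue_iff_mem_spectrum (norm_pos_iff.1 (hr.trans_le hrμ))).2 hμ⟩

theorem finite_spectrum_one_add_le_norm_sub_one (hT : IsCompactOperator T) {r : ℝ} (hr : 0 < r) :
    {z ∈ spectrum 𝕜 (1 + T) | r ≤ ‖z - 1‖}.Finite := by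
  refine ((hT.finite_spectrum_le_norm hr).image (· + 1)).subset fun z ⟨hz, hrz⟩ ↦
    ⟨z - 1, ⟨?_, hrz⟩, sub_add_cancel z 1⟩
  rw [← spectrum.add_mem_add_iff (s := 1), map_one, sub_add_cancel]
  exact hz

end IsCompactOperator

theorem Polynomial.exists_eval_zero_eq_one_forall_eval_eq_zero {K : Type*} [Field K]
    (F : Finset K) (hF : ∀ μ ∈ F, μ ≠ 0) :
    ∃ q : K[X], q.eval 0 = 1 ∧ q.natDegree ≤ F.card ∧ ∀ μ ∈ F, q.eval μ = 0 := by
  refine ⟨∏ μ ∈ F, (1 - C μ⁻¹ * X), by simp [eval_prod], ?_, fun μ hμ ↦ ?_⟩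
  · refine (natDegree_prod_le _ _).trans ((Finset.sum_le_card_nsmul _ _ 1 fun μ _ ↦ ?_).trans
      (by simp))
    exact (natDegree_sub_le _ _).trans
      (max_le (by simp) ((natDegree_C_mul_le _ _).trans natDegree_X_le))
  · rw [eval_prod]
    exact Finset.prod_eq_zero hμ (by simp [inv_mul_cancel₀ (hF μ hμ)])

theorem eventually_pow_le_pow_succ {θ η : ℝ} (hθ : 0 ≤ θ) (h : θ < η) :
    ∀ᶠ n : ℕ in atTop, θ ^ n ≤ η ^ (n + 1) := by
  have hη : 0 < η := hθ.trans_lt h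
  filter_upwards [(tendsto_pow_atTop_nhds_zero_of_lt_one (div_nonneg hθ hη.le)
    ((div_lt_one hη).2 h)).eventually_lt_const hη] with n hn
  calc θ ^ n = (θ / η) ^ n * η ^ n := by rw [div_pow, div_mul_cancel₀ _ (pow_pos hη n).ne']
    _ ≤ η * η ^ n := by gcongr
    _ = η ^ (n + 1) := (pow_succ' η n).symm

section BanachAlgebra

variable {A : Type*} [NormedRing A] [NormedAlgebra ℂ A] [CompleteSpace A]

theorem spectralRadius_aeval_le {a : A} {p : ℂ[X]} {c : ℝ}
    (h : ∀ z ∈ spectrum ℂ a, ‖p.eval z‖ ≤ c) : spectralRadius ℂ (aeval a p) ≤ ENNReal.ofReal c := by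
  cases subsingleton_or_nontrivial A
  · simp [spectralRadius, spectrum.of_subsingleton]
  · rw [spectralRadius, spectrum.map_polynomial_aeval]
    refine iSup₂_le ?_
    rintro _ ⟨z, hz, rfl⟩
    rw [← ENNReal.ofReal_coe_nnreal, coe_nnnorm]
    exact ENNReal.ofReal_le_ofReal (h z hz)

theorem eventually_norm_pow_le_of_spectralRadius_lt {a : A} {θ : ℝ}
    (h : spectralRadius ℂ a < ENNReal.ofReal θ) : ∀ᶠ n : ℕ in atTop, ‖a ^ n‖ ≤ θ ^ n := by
  filter_upwards [(spectrum.pow_norm_pow_one_div_tendsto_nhds_spectralRadius a).eventually_lt_const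
    h, eventually_ne_atTop 0] with n hn hn0
  rw [ENNReal.ofReal_lt_ofReal_iff', one_div] at hn
  rw [← Real.rpow_inv_natCast_pow (norm_nonneg (a ^ n)) hn0]
  exact pow_le_pow_left₀ (by positivity) hn.1.le n

theorem eventually_exists_norm_aeval_le_pow_of_spectralRadius_lt {a : A} {ε : ℝ} (hε : 0 < ε)
    (hε1 : ε ≤ 1) {d : ℕ} (hd : 0 < d) {p : ℂ[X]} (hp0 : p.eval 0 = 1) (hpd : p.natDegree ≤ d)
    (hp : spectralRadius ℂ (aeval a p) < ENNReal.ofReal (ε ^ d)) :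
    ∀ᶠ n in atTop, ∃ q : ℂ[X], q.coeff 0 = 1 ∧ q.natDegree ≤ n ∧ ‖aeval a q‖ ≤ ε ^ n := by
  obtain ⟨θ, hθ, hρθ, hθε⟩ := ENNReal.lt_iff_exists_real_btwn.1 hp
  rw [ENNReal.ofReal_lt_ofReal_iff (by positivity)] at hθε
  have hpow : ∀ᶠ N in atTop, ‖aeval a p ^ N‖ ≤ ε ^ (d * (N + 1)) := by
    filter_upwards [eventually_norm_pow_le_of_spectralRadius_lt hρθ,
      eventually_pow_le_pow_succ hθ hθε] with N h₁ h₂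
    rw [pow_mul]
    exact h₁.trans h₂
  filter_upwards [(Nat.tendsto_div_const_atTop hd.ne').eventually hpow] with n hn
  refine ⟨p ^ (n / d), by rw [coeff_zero_eq_eval_zero, eval_pow, hp0, one_pow], ?_, ?_⟩
  · exact natDegree_pow_le.trans ((Nat.mul_le_mul_left _ hpd).trans (Nat.div_mul_le_self n d))
  · rw [map_pow]
    exact hn.trans (pow_le_pow_of_le_one hε.le hε1 (Nat.lt_mul_div_succ n hd).le)

theorem exists_polynomial_spectralRadius_aeval_lt {a : A} (ha : 0 ∉ spectrum ℂ a) {r ε : ℝ}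
    (hr : 0 ≤ r) (hrε : r < ε) (hfin : {z ∈ spectrum ℂ a | r ≤ ‖z - 1‖}.Finite) :
    ∃ d > 0, ∃ p : ℂ[X], p.eval 0 = 1 ∧ p.natDegree ≤ d ∧
      spectralRadius ℂ (aeval a p) < ENNReal.ofReal (ε ^ d) := by
  have hε : 0 < ε := hr.trans_lt hrε
  obtain ⟨q, hq0, hqdeg, hqF⟩ := exists_eval_zero_eq_one_forall_eval_eq_zero hfin.toFinset
    fun μ hμ h ↦ ha (h ▸ (hfin.mem_toFinset.1 hμ).1)
  set m := hfin.toFinset.card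
  obtain ⟨M, hM⟩ := (spectrum.isCompact a).exists_bound_of_continuousOn
    (q.continuous (R := ℂ)).continuousOn
  obtain ⟨k, hk, hk0⟩ : ∃ k, M * (r / ε) ^ k < ε ^ m ∧ 0 < k := by
    refine ((((tendsto_pow_atTop_nhds_zero_of_lt_one (div_nonneg hr hε.le)
      ((div_lt_one hε).2 hrε)).const_mul M).eventually_lt_const ?_).and
      (eventually_gt_atTop 0)).exists
    simpa using pow_pos hε m
  have hMk : M * r ^ k < ε ^ (m + k) := by
    rw [pow_add, ← div_lt_iff₀ (pow_pos hε k), mul_div_assoc, ← div_pow]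
    exact hk
  refine ⟨m + k, by omega, q * (1 - X) ^ k, by simp [hq0], ?_, ?_⟩
  · refine natDegree_mul_le.trans (add_le_add hqdeg (natDegree_pow_le.trans ?_))
    have h1 : (1 - X : ℂ[X]).natDegree ≤ 1 := (natDegree_sub_le _ _).trans (by simp)
    simpa using Nat.mul_le_mul_left k h1
  refine (spectralRadius_aeval_le fun z hz ↦ ?_).trans_lt
    ((ENNReal.ofReal_lt_ofReal_iff (pow_pos hε _)).2 hMk)
  rw [eval_mul, eval_pow, norm_mul, norm_pow]
  by_cases hzr : r ≤ ‖z - 1‖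
  · rw [hqF z (hfin.mem_toFinset.2 ⟨hz, hzr⟩), norm_zero, zero_mul]
    exact mul_nonneg ((norm_nonneg _).trans (hM z hz)) (pow_nonneg hr k)
  · have h1z : ‖eval z (1 - X)‖ ≤ r := by
      simpa [norm_sub_rev] using (not_le.1 hzr).le
    exact mul_le_mul (hM z hz) (pow_le_pow_left₀ (norm_nonneg _) h1z k) (by positivity)
      ((norm_nonneg _).trans (hM z hz))

theorem eventually_exists_norm_aeval_le_pow {a : A} (ha : 0 ∉ spectrum ℂ a)
    (hfin : ∀ r > 0, {z ∈ spectrum ℂ a | r ≤ ‖z - 1‖}.Finite) {ε : ℝ} (hε : 0 < ε) :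
    ∀ᶠ n in atTop, ∃ q : ℂ[X], q.coeff 0 = 1 ∧ q.natDegree ≤ n ∧ ‖aeval a q‖ ≤ ε ^ n := by
  set δ := min ε 1
  have hδ : 0 < δ := lt_min hε one_pos
  obtain ⟨d, hd, p, hp0, hpd, hp⟩ := exists_polynomial_spectralRadius_aeval_lt ha
    (half_pos hδ).le (half_lt_self hδ) (hfin _ (half_pos hδ))
  filter_upwards [eventually_exists_norm_aeval_le_pow_of_spectralRadius_lt hδ (min_le_right _ _)
    hd hp0 hpd hp] with n ⟨q, hq0, hqn, hq⟩
  exact ⟨q, hq0, hqn, hq.trans (pow_le_pow_left₀ hδ.le (min_le_left _ _) n)⟩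

end BanachAlgebra

/-- GMRES converges superlinearly for `A = I + K` with `K` compact and `I + K` invertible:
the optimal Krylov (GMRES) residual after `n` steps is eventually bounded by `ε ^ n * ‖r₀‖`
for every `ε > 0`. -/
theorem gmres_superlinear_compact_perturbation
    {H : Type*} [NormedAddCommGroup H] [InnerProductSpace ℂ H] [CompleteSpace H]
    (K : H →L[ℂ] H) (hK : IsCompactOperator K) (hA : IsUnit (1 + K))
    (b x0 : H) :
    ∀ ε > (0 : ℝ), ∃ N : ℕ, ∀ n ≥ N,
      sInf {t : ℝ | ∃ p : Polynomial ℂ, p.coeff 0 = 1 ∧ p.natDegree ≤ n ∧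
        t = ‖(Polynomial.aeval (1 + K) p) (b - (1 + K) x0)‖}
      ≤ ε ^ n * ‖b - (1 + K) x0‖ := by
  intro ε hε
  obtain ⟨N, hN⟩ := (eventually_exists_norm_aeval_le_pow ((spectrum.zero_notMem_iff ℂ).2 hA)
    (fun _ ↦ hK.finite_spectrum_one_add_le_norm_sub_one) hε).exists_forall_of_atTop
  refine ⟨N, fun n hn ↦ ?_⟩
  obtain ⟨q, hq0, hqn, hq⟩ := hN n hn
  calc _ ≤ ‖aeval (1 + K) q (b - (1 + K) x0)‖ := by
        refine csInf_le ⟨0, ?_⟩ ⟨q, hq0, hqn, rfl⟩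
        rintro _ ⟨p, -, -, rfl⟩
        exact norm_nonneg _
    _ ≤ ‖aeval (1 + K) q‖ * ‖b - (1 + K) x0‖ := (aeval (1 + K) q).le_opNorm _
    _ ≤ ε ^ n * ‖b - (1 + K) x0‖ := by gcongr
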